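/- arXiv:0907.4096 — 4 statements merged into one kernel-verified Lean document; each statement's English description precedes it below -/
import Mathlib

section
/- Let n = pq with p, q distinct primes, let e be coprime to φ(n), and let k be a positive integer. Define T_{n,e,k} = {x ∈ Z_n* : x^(e^k) ≡ x (mod n), and x^(e^j) ≢ x (mod n) for all positive j < k}. Then |T_{n,e,k}| = Σ_{d | k} μ(k/d) · gcd(e^d − 1, p − 1) · gcd(e^d − 1, q − 1). -/
/-!
`T_{n,e,k}` is the set of points of minimal period exactly `k` of the RSA map `x ↦ x ^ e` on
`(ZMod (p * q))ˣ`. A unit is a periodic point of period `d` iff `x ^ (e ^ d - 1) = 1`;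
by the Chinese remainder theorem and the cyclicity of `(ZMod p)ˣ` and `(ZMod q)ˣ` there are
`gcd (e ^ d - 1) (p - 1) * gcd (e ^ d - 1) (q - 1)` of them. Points of period `k` are exactly
those whose minimal period divides `k`, so Möbius inversion over the divisors of `k` counts
those of minimal period `k`.
-/

open Function

namespace Function

variable {α : Type*} (f : α → α)

theorem minimalPeriod_eq_iff {x : α} {k : ℕ} (hk : 0 < k) :
    minimalPeriod f x = k ↔
      IsPeriodicPt f k x ∧ ∀ j, 0 < j → j < k → ¬ IsPeriodicPt f j x := by
  constructor
  · rintro rfl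
    exact ⟨isPeriodicPt_minimalPeriod f x,
      fun _ hj hjk => not_isPeriodicPt_of_pos_of_lt_minimalPeriod hj.ne' hjk⟩
  · rintro ⟨hper, hmin⟩
    refine (hper.minimalPeriod_le hk).antisymm (not_lt.mp fun hlt => ?_)
    exact hmin _ (hper.minimalPeriod_pos hk) hlt (isPeriodicPt_minimalPeriod f x)

theorem sum_card_minimalPeriod_eq_card_isPeriodicPt [Finite α] {k : ℕ} (hk : k ≠ 0) :
    ∑ d ∈ k.divisors, Nat.card {x // minimalPeriod f x = d} =
      Nat.card {x // IsPeriodicPt f k x} := by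
  classical
  have := Fintype.ofFinite α
  simp only [Nat.card_eq_fintype_card, Fintype.card_subtype]
  rw [Finset.card_eq_sum_card_fiberwise (f := minimalPeriod f) (t := k.divisors)]
  · refine Finset.sum_congr rfl fun d hd => ?_
    rw [Finset.filter_filter]
    refine congrArg _ (Finset.filter_congr fun x _ => ?_)
    rw [isPeriodicPt_iff_minimalPeriod_dvd]
    exact ⟨fun h => ⟨h ▸ Nat.dvd_of_mem_divisors hd, h⟩, fun h => h.2⟩
  · intro x hx
    simp only [Finset.coe_filter, isPeriodicPt_iff_minimalPeriod_dvd] at hx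
    exact Nat.mem_divisors.mpr ⟨hx.2, hk⟩

open ArithmeticFunction in
theorem card_minimalPeriod_eq_sum_moebius [Finite α] {k : ℕ} (hk : 0 < k) :
    (Nat.card {x // minimalPeriod f x = k} : ℤ) =
      ∑ d ∈ k.divisors, moebius (k / d) * (Nat.card {x // IsPeriodicPt f d x} : ℤ) := by
  have := (sum_eq_iff_sum_mul_moebius_eq (R := ℤ)
    (f := fun d => (Nat.card {x // minimalPeriod f x = d} : ℤ))
    (g := fun d => (Nat.card {x // IsPeriodicPt f d x} : ℤ))).mp (fun n hn => by
      exact_mod_cast sum_card_minimalPeriod_eq_card_isPeriodicPt f hn.ne') k hk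
  rw [← this, ← Nat.sum_divisorsAntidiagonal' fun a b =>
    moebius a * (Nat.card {x // IsPeriodicPt f b x} : ℤ)]
  simp only [Int.cast_id]

end Function

theorem isPeriodicPt_pow_iff_pow_eq_one {G : Type*} [Group G] {e : ℕ} (he : 0 < e) (j : ℕ)
    (u : G) :
    IsPeriodicPt (· ^ e) j u ↔ u ^ (e ^ j - 1) = 1 := by
  rw [IsPeriodicPt, IsFixedPt, pow_iterate, ← mul_eq_right (a := u ^ (e ^ j - 1)), ← pow_succ,
    Nat.sub_add_cancel (Nat.one_le_pow _ _ he)]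

theorem IsCyclic.card_pow_eq_one {G : Type*} [CommGroup G] [IsCyclic G] [Finite G] (m : ℕ) :
    Nat.card {x : G // x ^ m = 1} = (Nat.card G).gcd m :=
  IsCyclic.card_powMonoidHom_ker G m

theorem card_pow_eq_one_prod (G H : Type*) [Monoid G] [Monoid H] (m : ℕ) :
    Nat.card {x : G × H // x ^ m = 1} =
      Nat.card {x : G // x ^ m = 1} * Nat.card {y : H // y ^ m = 1} := by
  rw [← Nat.card_prod,
    ← Nat.card_congr (Equiv.subtypeProdEquivProd (p := (· ^ m = 1)) (q := (· ^ m = 1)))]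
  simp only [Prod.ext_iff, Prod.pow_fst, Prod.pow_snd, Prod.fst_one, Prod.snd_one]

theorem MulEquiv.card_pow_eq_one {G H : Type*} [Monoid G] [Monoid H] (f : G ≃* H) (m : ℕ) :
    Nat.card {x : G // x ^ m = 1} = Nat.card {y : H // y ^ m = 1} :=
  Nat.card_congr (f.toEquiv.subtypeEquiv fun x => by
    rw [← map_eq_one_iff f f.injective, map_pow]; rfl)

theorem ZMod.card_units_pow_eq_one_of_prime_mul_prime {p q : ℕ} (hp : p.Prime) (hq : q.Prime)
    (hpq : p ≠ q) (m : ℕ) :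
    Nat.card {u : (ZMod (p * q))ˣ // u ^ m = 1} = m.gcd (p - 1) * m.gcd (q - 1) := by
  have := Fact.mk hp; have := Fact.mk hq
  let crt : (ZMod (p * q))ˣ ≃* (ZMod p)ˣ × (ZMod q)ˣ :=
    (Units.mapEquiv (ZMod.chineseRemainder ((Nat.coprime_primes hp hq).mpr hpq)).toMulEquiv).trans
      MulEquiv.prodUnits
  rw [crt.card_pow_eq_one, card_pow_eq_one_prod, IsCyclic.card_pow_eq_one,
    IsCyclic.card_pow_eq_one, Nat.card_eq_fintype_card, Nat.card_eq_fintype_card,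
    ZMod.card_units, ZMod.card_units,
    Nat.gcd_comm, Nat.gcd_comm (q - 1)]

theorem ZMod.card_coprime_lt_eq_card_units {n : ℕ} [NeZero n] {P : ℕ → Prop}
    {Q : (ZMod n)ˣ → Prop}
    (hPQ : ∀ x (hx : x.Coprime n), P x ↔ Q (ZMod.unitOfCoprime x hx)) :
    Nat.card {x : ℕ // x < n ∧ x.Coprime n ∧ P x} = Nat.card {u : (ZMod n)ˣ // Q u} :=
  have unitOfCoprime_val (u : (ZMod n)ˣ) :
      ZMod.unitOfCoprime _ (ZMod.val_coe_unit_coprime u) = u :=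
    Units.ext (by simp)
  Nat.card_congr
    { toFun x := ⟨ZMod.unitOfCoprime x.1 x.2.2.1, (hPQ _ _).mp x.2.2.2⟩
      invFun u := ⟨(u.1 : ZMod n).val, ZMod.val_lt _, ZMod.val_coe_unit_coprime _,
        (hPQ _ _).mpr ((unitOfCoprime_val u.1).symm ▸ u.2)⟩
      left_inv x := Subtype.ext (ZMod.val_natCast_of_lt x.2.1)
      right_inv u := Subtype.ext (unitOfCoprime_val u.1) }

theorem ZMod.isPeriodicPt_pow_unitOfCoprime_iff {n x : ℕ} (hx : x.Coprime n) (e j : ℕ) :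
    IsPeriodicPt (· ^ e) j (ZMod.unitOfCoprime x hx) ↔ x ^ e ^ j ≡ x [MOD n] := by
  rw [IsPeriodicPt, IsFixedPt, pow_iterate, Units.ext_iff, Units.val_pow_eq_pow_val,
    ZMod.coe_unitOfCoprime, ← Nat.cast_pow, ZMod.natCast_eq_natCast_iff]

theorem Nat.pos_of_coprime_totient {n e : ℕ} (hn : 2 < n) (he : e.Coprime n.totient) : 0 < e :=
  Nat.pos_of_ne_zero fun h => by
    subst h
    rcases Nat.totient_eq_one_iff.mp ((Nat.coprime_zero_left _).mp he) with h | h <;> omega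

theorem stmt3 (p q e k : ℕ) (hp : p.Prime) (hq : q.Prime) (hpq : p ≠ q)
    (he : Nat.Coprime e (Nat.totient (p * q))) (hk : 0 < k) :
    (Nat.card {x : ℕ // x < p * q ∧ Nat.Coprime x (p * q) ∧
        x ^ e ^ k ≡ x [MOD p * q] ∧
        ∀ j, 0 < j → j < k → ¬ x ^ e ^ j ≡ x [MOD p * q]} : ℤ) =
      ∑ d ∈ k.divisors, (ArithmeticFunction.moebius (k / d)) *
        (Nat.gcd (e ^ d - 1) (p - 1) : ℤ) * (Nat.gcd (e ^ d - 1) (q - 1) : ℤ) := by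
  have : NeZero (p * q) := ⟨(Nat.mul_pos hp.pos hq.pos).ne'⟩
  have he₀ : 0 < e := Nat.pos_of_coprime_totient (by nlinarith [hp.two_le, hq.two_le]) he
  rw [ZMod.card_coprime_lt_eq_card_units (Q := fun u => minimalPeriod (· ^ e) u = k)
      fun x hx => by
        simp only [minimalPeriod_eq_iff _ hk, ZMod.isPeriodicPt_pow_unitOfCoprime_iff],
    card_minimalPeriod_eq_sum_moebius _ hk]
  refine Finset.sum_congr rfl fun d _ => ?_
  rw [Nat.card_congr (Equiv.subtypeEquivRight (isPeriodicPt_pow_iff_pow_eq_one he₀ d)),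
    ZMod.card_units_pow_eq_one_of_prime_mul_prime hp hq hpq]
  push_cast
  ring
end

section
/- Let n = pq with p, q distinct odd primes and let e be coprime to φ(n). Then the number of x in Z_n with x^e ≡ x (mod n) equals (gcd(e − 1, p − 1) + 1) · (gcd(e − 1, q − 1) + 1). -/
open Finset

/-- In a finite cyclic group, the number of solutions of `a ^ m = 1` is `gcd m |G|`. -/
lemma card_pow_eq_one_cyclic (G : Type*) [Group G] [Fintype G] [DecidableEq G] [IsCyclic G]
    (m : ℕ) : Nat.card {a : G // a ^ m = 1} = Nat.gcd m (Fintype.card G) := by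
  classical
  set n := Fintype.card G with hn
  have hn0 : 0 < n := Fintype.card_pos
  set d := Nat.gcd m n with hdd
  have hd0 : 0 < d := Nat.gcd_pos_of_pos_right _ hn0
  have hdn : d ∣ n := Nat.gcd_dvd_right _ _
  have hdm : d ∣ m := Nat.gcd_dvd_left _ _
  rw [Nat.card_eq_fintype_card, Fintype.card_subtype]
  apply le_antisymm
  · calc #(univ.filter fun a : G => a ^ m = 1)
        ≤ #(univ.filter fun a : G => a ^ d = 1) := by
          apply Finset.card_le_card
          intro a ha
          simp only [Finset.mem_filter, Finset.mem_univ, true_and] at ha ⊢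
          have h1 : orderOf a ∣ m := orderOf_dvd_of_pow_eq_one ha
          have h2 : orderOf a ∣ n := orderOf_dvd_card
          exact orderOf_dvd_iff_pow_eq_one.mp (Nat.dvd_gcd h1 h2)
      _ ≤ d := by
          have := IsCyclic.card_pow_eq_one_le (α := G) (n := d) hd0
          convert this using 2
  · obtain ⟨g, hg⟩ := IsCyclic.exists_generator (α := G)
    have hog : orderOf g = n := by
      rw [orderOf_eq_card_of_forall_mem_zpowers hg, Nat.card_eq_fintype_card]
    set x := g ^ (n / d) with hx
    have hox : orderOf x = d := by
      rw [hx, orderOf_pow, hog, Nat.gcd_eq_right (Nat.div_dvd_of_dvd hdn),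
        Nat.div_div_self hdn hn0.ne']
    have hsub : (Subgroup.zpowers x : Set G).toFinset ⊆
        univ.filter fun a : G => a ^ m = 1 := by
      intro y hy
      simp only [Set.mem_toFinset, SetLike.mem_coe] at hy
      simp only [Finset.mem_filter, Finset.mem_univ, true_and]
      have h1 : orderOf y ∣ d := by
        rw [← hox]; exact orderOf_dvd_of_mem_zpowers hy
      exact orderOf_dvd_iff_pow_eq_one.mp (h1.trans hdm)
    have hcard : (Subgroup.zpowers x : Set G).toFinset.card = d := by
      simp only [Set.toFinset_card, SetLike.coe_sort_coe, Fintype.card_zpowers]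
      exact hox
    calc d = (Subgroup.zpowers x : Set G).toFinset.card := hcard.symm
      _ ≤ _ := Finset.card_le_card hsub

/-- Number of solutions of `x ^ e = x` in a finite field. -/
lemma card_pow_eq_self_field (F : Type*) [Field F] [Fintype F] [DecidableEq F]
    (e : ℕ) (he : 1 ≤ e) :
    Nat.card {x : F // x ^ e = x} = Nat.gcd (e - 1) (Fintype.card F - 1) + 1 := by
  classical
  have key : {x : F // x ^ e = x} ≃ Option {u : Fˣ // u ^ (e - 1) = 1} := by
    refine ⟨fun x => if h : (x : F) = 0 then none else some ⟨Units.mk0 x.1 h, ?_⟩,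
      fun o => o.elim ⟨0, by rw [zero_pow (by omega)]⟩
        (fun u => ⟨(u.1 : F), ?_⟩), ?_, ?_⟩
    · ext
      have hx := x.2
      have : (x : F) ^ (e - 1) * (x : F) = 1 * (x : F) := by
        rw [one_mul, ← pow_succ]
        have : e - 1 + 1 = e := by omega
        rw [this]; exact hx
      have hxe : (x : F) ^ (e - 1) = 1 := mul_right_cancel₀ h this
      simpa using hxe
    · have hu := u.2
      have : ((u.1 : Fˣ) : F) ^ (e - 1) = 1 := by
        rw [← Units.val_pow_eq_pow_val, hu, Units.val_one]
      calc ((u.1 : Fˣ) : F) ^ e = ((u.1 : Fˣ) : F) ^ (e - 1) * ((u.1 : Fˣ) : F) := by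
            rw [← pow_succ]; congr 1; omega
        _ = ((u.1 : Fˣ) : F) := by rw [this, one_mul]
    · intro x
      by_cases h : (x : F) = 0
      · simp only [h, dif_pos]
        exact Subtype.ext h.symm
      · simp only [h, dif_neg, not_false_iff]
        rfl
    · intro o
      match o with
      | none => simp
      | some u =>
        have : ((u.1 : Fˣ) : F) ≠ 0 := Units.ne_zero _
        simp only [this, dif_neg, not_false_iff, Option.some.injEq]
        ext; simp
  rw [Nat.card_congr key, Finite.card_option, card_pow_eq_one_cyclic,
    Fintype.card_units]

theorem stmt7 (p q e : ℕ) (hp : p.Prime) (hq : q.Prime) (hpq : p ≠ q)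
    (hpo : Odd p) (hqo : Odd q) (he : Nat.Coprime e (Nat.totient (p * q))) :
    Nat.card {x : ℕ // x < p * q ∧ x ^ e ≡ x [MOD p * q]} =
      (Nat.gcd (e - 1) (p - 1) + 1) * (Nat.gcd (e - 1) (q - 1) + 1) := by
  classical
  have hcop : Nat.Coprime p q := (Nat.coprime_primes hp hq).mpr hpq
  have hn0 : 0 < p * q := Nat.mul_pos hp.pos hq.pos
  haveI : NeZero (p * q) := ⟨hn0.ne'⟩
  haveI : Fact p.Prime := ⟨hp⟩
  haveI : Fact q.Prime := ⟨hq⟩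
  -- e ≥ 1
  have htot : Nat.totient (p * q) = (p - 1) * (q - 1) := by
    rw [Nat.totient_mul hcop, Nat.totient_prime hp, Nat.totient_prime hq]
  have hp3 : 3 ≤ p := by have := hp.two_le; have := Nat.odd_iff.mp hpo; omega
  have hq3 : 3 ≤ q := by have := hq.two_le; have := Nat.odd_iff.mp hqo; omega
  have he1 : 1 ≤ e := by
    rcases Nat.eq_zero_or_pos e with h0 | h1
    · exfalso
      rw [h0] at he
      have := he.symm
      rw [Nat.coprime_zero_right] at this
      rw [htot] at this
      have : (p - 1) * (q - 1) = 1 := this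
      have h4 := Nat.mul_le_mul (show 2 ≤ p - 1 by omega) (show 2 ≤ q - 1 by omega)
      omega
    · exact h1
  -- Step 1: pass to ZMod (p*q)
  have e1 : {x : ℕ // x < p * q ∧ x ^ e ≡ x [MOD p * q]} ≃
      {x : ZMod (p * q) // x ^ e = x} := by
    refine ⟨fun x => ⟨(x.1 : ZMod (p * q)), ?_⟩,
      fun y => ⟨y.1.val, y.1.val_lt, ?_⟩, ?_, ?_⟩
    · have := (ZMod.natCast_eq_natCast_iff _ _ _).mpr x.2.2
      push_cast at this
      exact this
    · have : ((y.1.val ^ e : ℕ) : ZMod (p * q)) = ((y.1.val : ℕ) : ZMod (p * q)) := by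
        push_cast
        rw [ZMod.natCast_val, ZMod.cast_id]
        exact y.2
      exact (ZMod.natCast_eq_natCast_iff _ _ _).mp this
    · intro x
      ext
      simp only
      exact ZMod.val_natCast_of_lt x.2.1
    · intro y
      ext
      simp [ZMod.natCast_val, ZMod.cast_id]
  -- Step 2: CRT
  have φ := ZMod.chineseRemainder hcop
  have e2 : {x : ZMod (p * q) // x ^ e = x} ≃
      {y : ZMod p × ZMod q // y.1 ^ e = y.1 ∧ y.2 ^ e = y.2} := by
    refine (φ.toEquiv.subtypeEquiv fun x => ?_)
    constructor
    · intro h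
      constructor
      · have : (φ (x ^ e)).1 = (φ x).1 := by rw [h]
        rwa [map_pow] at this
      · have : (φ (x ^ e)).2 = (φ x).2 := by rw [h]
        rwa [map_pow] at this
    · intro ⟨h1, h2⟩
      have : φ (x ^ e) = φ x := by
        rw [map_pow]
        exact Prod.ext h1 h2
      exact φ.injective (by rwa [map_pow] at this ⊢)
  have e3 : {y : ZMod p × ZMod q // y.1 ^ e = y.1 ∧ y.2 ^ e = y.2} ≃
      {a : ZMod p // a ^ e = a} × {b : ZMod q // b ^ e = b} :=
    Equiv.subtypeProdEquivProd (p := fun a : ZMod p => a ^ e = a) (q := fun b : ZMod q => b ^ e = b)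
  rw [Nat.card_congr (e1.trans (e2.trans e3)), Nat.card_prod,
    card_pow_eq_self_field _ e he1, card_pow_eq_self_field _ e he1,
    ZMod.card, ZMod.card]
end

section
/- Let n = pq with p, q distinct primes, let e be coprime to φ(n), and let k be a positive integer. Then the number of units x modulo n with x^(e^k) ≡ x (mod n) equals gcd(e^k − 1, p − 1) · gcd(e^k − 1, q − 1). -/
/-! By the Chinese remainder theorem, `(ZMod (p * q))ˣ ≃* (ZMod p)ˣ × (ZMod q)ˣ`, a product of
cyclic groups of orders `p - 1` and `q - 1`. Writing `e ^ k = m + 1`, a unit fixed by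
`x ↦ x ^ (m + 1)` is exactly a solution of `x ^ m = 1`, and a cyclic group of order `N` has
`gcd m N` of those. -/

theorem Units.val_pow_succ_eq_self_iff {M : Type*} [Monoid M] (u : Mˣ) (m : ℕ) :
    (u : M) ^ (m + 1) = u ↔ u ^ m = 1 := by
  rw [← Units.val_pow_eq_pow_val, Units.val_inj, pow_succ, mul_eq_right]

section powMonoidHom

variable {G H : Type*} [CommGroup G] [CommGroup H]

theorem MulEquiv.card_ker_powMonoidHom (f : G ≃* H) (d : ℕ) :
    Nat.card (powMonoidHom d : G →* G).ker = Nat.card (powMonoidHom d : H →* H).ker :=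
  Nat.card_congr <| f.toEquiv.subtypeEquiv fun x => by simp [← map_pow]

theorem card_ker_powMonoidHom_prod (d : ℕ) :
    Nat.card (powMonoidHom d : G × H →* G × H).ker =
      Nat.card (powMonoidHom d : G →* G).ker * Nat.card (powMonoidHom d : H →* H).ker := by
  have hker : (powMonoidHom d : G × H →* G × H).ker =
      (powMonoidHom d : G →* G).ker.prod (powMonoidHom d : H →* H).ker := by
    ext x
    simp [Subgroup.mem_prod, Prod.ext_iff]
  rw [hker, Nat.card_congr (Subgroup.prodEquiv _ _).toEquiv, Nat.card_prod]

end powMonoidHom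

namespace ZMod

theorem card_ker_powMonoidHom_units_mul {m n : ℕ} (h : m.Coprime n) (d : ℕ) :
    Nat.card (powMonoidHom d : (ZMod (m * n))ˣ →* _).ker =
      Nat.card (powMonoidHom d : (ZMod m)ˣ →* _).ker *
        Nat.card (powMonoidHom d : (ZMod n)ˣ →* _).ker := by
  rw [((Units.mapEquiv (chineseRemainder h).toMulEquiv).trans .prodUnits).card_ker_powMonoidHom,
    card_ker_powMonoidHom_prod]

theorem card_ker_powMonoidHom_units_prime {p : ℕ} [Fact p.Prime] (d : ℕ) :
    Nat.card (powMonoidHom d : (ZMod p)ˣ →* _).ker = Nat.gcd d (p - 1) := by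
  rw [IsCyclic.card_powMonoidHom_ker, Nat.card_eq_fintype_card, card_units, Nat.gcd_comm]

theorem card_coprime_pow_succ_modEq_self (n m : ℕ) [NeZero n] :
    Nat.card {x : ℕ // x < n ∧ x.Coprime n ∧ x ^ (m + 1) ≡ x [MOD n]} =
      Nat.card (powMonoidHom m : (ZMod n)ˣ →* _).ker := by
  refine Nat.card_congr
    { toFun := fun x => ⟨unitOfCoprime x.1 x.2.2.1, ?_⟩
      invFun := fun u => ⟨(u.1 : ZMod n).val, val_lt _, val_coe_unit_coprime _, ?_⟩
      left_inv := fun x => Subtype.ext (val_cast_of_lt x.2.1)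
      right_inv := fun u => Subtype.ext (Units.ext (natCast_zmod_val _)) }
  · rw [MonoidHom.mem_ker, powMonoidHom_apply, ← Units.val_pow_succ_eq_self_iff, coe_unitOfCoprime]
    exact_mod_cast (natCast_eq_natCast_iff _ _ _).2 x.2.2.2
  · rw [← natCast_eq_natCast_iff]
    push_cast
    rw [natCast_zmod_val, Units.val_pow_succ_eq_self_iff]
    exact u.2

end ZMod

theorem stmt9_general (p q e k : ℕ) (hp : p.Prime) (hq : q.Prime) (hpq : p ≠ q)
    (he : Nat.Coprime e (Nat.totient (p * q))) :
    Nat.card {x : ℕ // x < p * q ∧ Nat.Coprime x (p * q) ∧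
        x ^ e ^ k ≡ x [MOD p * q]} =
      Nat.gcd (e ^ k - 1) (p - 1) * Nat.gcd (e ^ k - 1) (q - 1) := by
  have : Fact p.Prime := ⟨hp⟩
  have : Fact q.Prime := ⟨hq⟩
  have : NeZero (p * q) := ⟨(Nat.mul_pos hp.pos hq.pos).ne'⟩
  have he0 : e ≠ 0 := by
    rintro rfl
    rw [Nat.coprime_zero_left, Nat.totient_eq_one_iff] at he
    have := hp.two_le
    have := hq.two_le
    rcases he with h | h <;> nlinarith
  obtain ⟨m, hm⟩ := Nat.exists_eq_add_one_of_ne_zero (pow_ne_zero k he0)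
  rw [hm, Nat.add_sub_cancel, ZMod.card_coprime_pow_succ_modEq_self,
    ZMod.card_ker_powMonoidHom_units_mul ((Nat.coprime_primes hp hq).2 hpq),
    ZMod.card_ker_powMonoidHom_units_prime, ZMod.card_ker_powMonoidHom_units_prime]

theorem stmt9 (p q e k : ℕ) (hp : p.Prime) (hq : q.Prime) (hpq : p ≠ q)
    (he : Nat.Coprime e (Nat.totient (p * q))) (hk : 0 < k) :
    Nat.card {x : ℕ // x < p * q ∧ Nat.Coprime x (p * q) ∧
        x ^ e ^ k ≡ x [MOD p * q]} =
      Nat.gcd (e ^ k - 1) (p - 1) * Nat.gcd (e ^ k - 1) (q - 1) :=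
  stmt9_general p q e k hp hq hpq he
end

section
/- Let n > 1 and r ≥ 2. Then the number of x with 1 ≤ x ≤ n satisfying x^r ≡ x (mod n) equals ∏_{i=1}^m (1 + gcd(r − 1, φ(p_i^{a_i}))), where n = ∏_{i=1}^m p_i^{a_i} is the canonical factorization of n and n is squarefree. -/
/-!
By the Chinese remainder theorem `ZMod n` is the product of the rings `ZMod p` over the primes
`p ∣ n` (as `n` is squarefree), and the solutions of `x ^ r = x` in a product are the tuples of
solutions in the factors. In the field `ZMod p` a solution is either `0` or a unit with
`x ^ (r - 1) = 1`, and in the cyclic group `(ZMod p)ˣ` of order `p - 1` there are exactly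
`gcd (r - 1, p - 1)` of those.
-/

theorem MulEquiv.card_pow_eq_self {M N : Type*} [Monoid M] [Monoid N] (e : M ≃* N) (r : ℕ) :
    Nat.card {x : M // x ^ r = x} = Nat.card {y : N // y ^ r = y} :=
  Nat.card_congr <| e.toEquiv.subtypeEquiv fun x => by
    rw [← e.injective.eq_iff, map_pow]
    rfl

theorem Pi.card_pow_eq_self {ι : Type*} [Fintype ι] {M : ι → Type*} [∀ i, Monoid (M i)]
    (r : ℕ) :
    Nat.card {f : ∀ i, M i // f ^ r = f} = ∏ i, Nat.card {x : M i // x ^ r = x} := by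
  rw [← Nat.card_pi]
  exact Nat.card_congr <| (Equiv.subtypeEquivRight fun f => by
    simp only [funext_iff, Pi.pow_apply]).trans
      (Equiv.subtypePiEquivPi (p := fun _ x => x ^ r = x))

theorem ZMod.card_pow_eq_self_eq_prod {n : ℕ} (hn : n ≠ 0) (r : ℕ) :
    Nat.card {x : ZMod n // x ^ r = x} =
      ∏ p ∈ n.primeFactors, Nat.card {x : ZMod (p ^ n.factorization p) // x ^ r = x} := by
  rw [(ZMod.equivPi n hn).toMulEquiv.card_pow_eq_self, Pi.card_pow_eq_self,
    Finset.prod_coe_sort n.primeFactors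
      fun p => Nat.card {x : ZMod (p ^ n.factorization p) // x ^ r = x}]

theorem pow_eq_self_iff {M₀ : Type*} [MonoidWithZero M₀] [IsRightCancelMulZero M₀] {r : ℕ}
    (hr : 0 < r) (z : M₀) :
    z ^ r = z ↔ z = 0 ∨ (z ≠ 0 ∧ z ^ (r - 1) = 1) := by
  obtain ⟨d, rfl⟩ := Nat.exists_eq_add_of_lt hr
  rw [zero_add, Nat.add_sub_cancel, pow_succ, mul_left_eq_self₀]
  tauto

theorem FiniteField.card_pow_eq_self (K : Type*) [Field K] [Finite K] {r : ℕ} (hr : 0 < r) :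
    Nat.card {z : K // z ^ r = z} = 1 + Nat.gcd (r - 1) (Nat.card K - 1) := by
  classical
  have hroots :
      Nat.card {z : K // z ≠ 0 ∧ z ^ (r - 1) = 1} = Nat.gcd (r - 1) (Nat.card K - 1) := by
    rw [Nat.gcd_comm, ← Nat.card_units, ← IsCyclic.card_powMonoidHom_ker]
    refine Nat.card_congr <| (Equiv.subtypeSubtypeEquivSubtypeInter (· ≠ 0) _).symm.trans <|
      unitsEquivNeZero.symm.subtypeEquiv fun z => ?_
    rw [MonoidHom.mem_ker, powMonoidHom_apply, Units.ext_iff, Units.val_pow_eq_pow_val]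
    rfl
  calc Nat.card {z : K // z ^ r = z}
      = Nat.card ({z : K // z = 0} ⊕ {z : K // z ≠ 0 ∧ z ^ (r - 1) = 1}) :=
        Nat.card_congr <| (Equiv.subtypeEquivRight (pow_eq_self_iff hr)).trans <|
          subtypeOrEquiv _ _ (Pi.disjoint_iff.2 fun z => by simp +contextual [disjoint_iff])
    _ = 1 + Nat.gcd (r - 1) (Nat.card K - 1) := by rw [Nat.card_sum, Nat.card_unique, hroots]

theorem ZMod.card_subtype_Icc_one_natCast (n : ℕ) [NeZero n] (P : ZMod n → Prop) :
    Nat.card {x : ℕ // 1 ≤ x ∧ x ≤ n ∧ P x} = Nat.card {y : ZMod n // P y} := by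
  -- the inverse represents `0 : ZMod n` by `n` rather than by `0`
  refine Nat.card_congr
    { toFun x := ⟨x.1, x.2.2.2⟩
      invFun y := ⟨(y.1 - 1).val + 1, by omega, (y.1 - 1).val_lt, by simpa using y.2⟩
      left_inv := ?_
      right_inv y := by ext; simp }
  rintro ⟨x, hx1, hxn, -⟩
  ext
  have : (x : ZMod n) - 1 = ((x - 1 : ℕ) : ZMod n) := by rw [Nat.cast_sub hx1, Nat.cast_one]
  simp only [this, ZMod.val_natCast, Nat.mod_eq_of_lt (by omega : x - 1 < n)]
  omega

theorem stmt12_general (n r : ℕ) (hr : 2 ≤ r) (hsf : Squarefree n) :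
    Nat.card {x : ℕ // 1 ≤ x ∧ x ≤ n ∧ x ^ r ≡ x [MOD n]} =
      ∏ p ∈ n.factorization.support,
        (1 + Nat.gcd (r - 1) (Nat.totient (p ^ n.factorization p))) := by
  have hn : n ≠ 0 := hsf.ne_zero
  have : NeZero n := ⟨hn⟩
  simp_rw [← ZMod.natCast_eq_natCast_iff, Nat.cast_pow]
  rw [ZMod.card_subtype_Icc_one_natCast n fun y => y ^ r = y, ZMod.card_pow_eq_self_eq_prod hn,
    Nat.support_factorization]
  refine Finset.prod_congr rfl fun p hpn => ?_
  have hp : p.Prime := Nat.prime_of_mem_primeFactors hpn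
  have : Fact p.Prime := ⟨hp⟩
  rw [Nat.factorization_eq_one_of_squarefree hsf hp (Nat.dvd_of_mem_primeFactors hpn), pow_one,
    FiniteField.card_pow_eq_self _ (by omega), Nat.card_zmod, Nat.totient_prime hp]

theorem stmt12 (n r : ℕ) (hn : 1 < n) (hr : 2 ≤ r) (hsf : Squarefree n) :
    Nat.card {x : ℕ // 1 ≤ x ∧ x ≤ n ∧ x ^ r ≡ x [MOD n]} =
      ∏ p ∈ n.factorization.support,
        (1 + Nat.gcd (r - 1) (Nat.totient (p ^ n.factorization p))) :=
  stmt12_general n r hr hsf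
end
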